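/- arXiv:math/0512087 — 3 statements merged into one kernel-verified Lean document; each statement's English description precedes it below -/
import Mathlib

section
/- Let Y be a connected, locally finite simple graph with vertex set V and let H be a group acting freely on V by automorphisms of Y. Suppose the number of filtered ends e(Y,H) equals e with e finite and nonzero. Then there exists an increasing sequence of finite subsets D₁ ⊆ D₂ ⊆ ⋯ of V with ⋃ₙ H•Dₙ = V such that for every n, the subgraph of Y induced on V ∖ H•Dₙ has exactly e connected components, and every one of these components is H-unbounded. -/
open SimpleGraph

/-- The saturation `K • S` of a set `S` of vertices under the action of a subgroup `K`. -/
def Subgroup.satSet {H : Type*} [Group H] (K : Subgroup H) {V : Type*} [MulAction H V]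
    (S : Set V) : Set V :=
  {v | ∃ g ∈ K, ∃ s ∈ S, g • s = v}

theorem Subgroup.satSet_mono {H : Type*} [Group H] (K : Subgroup H) {V : Type*}
    [MulAction H V] {S S' : Set V} (h : S ⊆ S') : K.satSet S ⊆ K.satSet S' := by
  rintro v ⟨g, hg, s, hs, rfl⟩
  exact ⟨g, hg, s, h hs, rfl⟩

/-- A set of vertices is `K`-bounded if it is contained in the saturation of a finite set. -/
def Subgroup.bddSet {H : Type*} [Group H] (K : Subgroup H) {V : Type*} [MulAction H V]
    (A : Set V) : Prop :=
  ∃ T : Finset V, A ⊆ K.satSet ↑T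

/-- The inclusion of one induced subgraph into a larger one, as a graph homomorphism. -/
def SimpleGraph.inclHom {V : Type*} (Y : SimpleGraph V) {W W' : Set V} (h : W ⊆ W') :
    Y.induce W →g Y.induce W' where
  toFun v := ⟨v.1, h v.2⟩
  map_rel' := fun hab => hab

/-- The set of filtered ends of a graph `Y` with respect to a subgroup `K` of a group acting
on the vertices: the inverse limit, over finite sets `S` of vertices directed by inclusion, of
the sets of connected components of the subgraph induced on the complement of `K • S`. -/
def filteredEnds {V H : Type*} [Group H] [MulAction H V] (Y : SimpleGraph V)
    (K : Subgroup H) : Type _ :=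
  { f : ∀ S : Finset V, (Y.induce ((K.satSet (S : Set V))ᶜ)).ConnectedComponent //
      ∀ ⦃S S' : Finset V⦄ (h : S ⊆ S'),
        (f S').map (Y.inclHom (Set.compl_subset_compl.mpr
          (K.satSet_mono (Finset.coe_subset.mpr h)))) = f S }

/-- The set of vertices adjacent to some vertex of `W`. -/
def SimpleGraph.nbhd {V : Type*} (Y : SimpleGraph V) (W : Set V) : Set V :=
  {v | ∃ w ∈ W, Y.Adj v w}

/-- The Cayley graph of a group with respect to a finite set `S₀`. -/
def cayleyGraph (G : Type*) [Group G] (S₀ : Finset G) : SimpleGraph G where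
  Adj x y := x ≠ y ∧ (x⁻¹ * y ∈ S₀ ∨ y⁻¹ * x ∈ S₀)
  symm := ⟨by
    rintro x y ⟨hne, h⟩
    exact ⟨hne.symm, h.symm⟩⟩
  loopless := ⟨fun x h => h.1 rfl⟩


/-!
For a nonempty finite set `S`, let `B` be the union of the `H`-bounded components of
`V ∖ H•S`. It is `H`-invariant, and every component of `V ∖ H•S` has a translate adjacent to
the finite set `S`; so `B` lies in the saturation of finitely many bounded components, hence
`B = H•T` for a finite `T`, and `D = S ∪ T` leaves only unbounded components. Iterating this
along an enumeration of the (countable) vertex set gives an exhausting sequence `Dₙ` all of whose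
levels have only unbounded components. An unbounded component at a level is not swallowed by
`H•D'` for a larger finite `D'`, so restriction between levels is surjective and every component
at level `n` extends to a filtered end. Finitely many ends are separated by one finite set,
which we put into `D₀`; then the components at every level are in bijection with the ends.
-/

open Set Function

namespace Subgroup

variable {H V : Type*} [Group H] [MulAction H V] (K : Subgroup H) {S T : Set V} {g : H} {v : V}

theorem subset_satSet : S ⊆ K.satSet S :=
  fun s hs => ⟨1, K.one_mem, s, hs, one_smul H s⟩

theorem smul_mem_satSet (hg : g ∈ K) (hv : v ∈ K.satSet S) : g • v ∈ K.satSet S := by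
  obtain ⟨g', hg', s, hs, rfl⟩ := hv
  exact ⟨g * g', K.mul_mem hg hg', s, hs, mul_smul g g' s⟩

theorem smul_mem_satSet_iff (hg : g ∈ K) : g • v ∈ K.satSet S ↔ v ∈ K.satSet S :=
  ⟨fun h => inv_smul_smul g v ▸ K.smul_mem_satSet (K.inv_mem hg) h, K.smul_mem_satSet hg⟩

theorem smul_mem_compl_satSet (hg : g ∈ K) (hv : v ∈ (K.satSet S)ᶜ) : g • v ∈ (K.satSet S)ᶜ :=
  fun h => hv ((K.smul_mem_satSet_iff hg).mp h)

theorem compl_satSet_subset_of_subset {S S' : Finset V} (h : S ⊆ S') :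
    (K.satSet (S' : Set V))ᶜ ⊆ (K.satSet (S : Set V))ᶜ :=
  compl_subset_compl.mpr (K.satSet_mono (Finset.coe_subset.mpr h))

theorem satSet_union : K.satSet (S ∪ T) = K.satSet S ∪ K.satSet T := by
  ext v
  constructor
  · rintro ⟨g, hg, s, hs | hs, rfl⟩
    exacts [Or.inl ⟨g, hg, s, hs, rfl⟩, Or.inr ⟨g, hg, s, hs, rfl⟩]
  · rintro (hv | hv)
    exacts [K.satSet_mono subset_union_left hv, K.satSet_mono subset_union_right hv]

theorem satSet_subset_of_smul_mem (hT : ∀ g ∈ K, ∀ v ∈ T, g • v ∈ T) (hST : S ⊆ T) :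
    K.satSet S ⊆ T := by
  rintro _ ⟨g, hg, s, hs, rfl⟩
  exact hT g hg s (hST hs)

theorem bddSet_satSet (h : K.bddSet S) : K.bddSet (K.satSet S) := by
  obtain ⟨T, hT⟩ := h
  exact ⟨T, K.satSet_subset_of_smul_mem (fun g hg _ => K.smul_mem_satSet hg) hT⟩

theorem bddSet_biUnion {ι : Type*} {I : Set ι} (hI : I.Finite) {A : ι → Set V}
    (h : ∀ i ∈ I, K.bddSet (A i)) : K.bddSet (⋃ i ∈ I, A i) := by
  classical
  choose! T hT using h
  refine ⟨hI.toFinset.biUnion T, iUnion₂_subset fun i hi => (hT i hi).trans (K.satSet_mono ?_)⟩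
  exact Finset.coe_subset.mpr (Finset.subset_biUnion_of_mem T (hI.mem_toFinset.mpr hi))

theorem exists_finset_satSet_eq (hinv : ∀ g ∈ K, ∀ v ∈ S, g • v ∈ S) (h : K.bddSet S) :
    ∃ T : Finset V, K.satSet T = S := by
  classical
  obtain ⟨T, hT⟩ := h
  refine ⟨T.filter (· ∈ S),
    (K.satSet_subset_of_smul_mem hinv fun t ht => ?_).antisymm fun v hv => ?_⟩
  · exact (Finset.mem_filter.mp ht).2
  · obtain ⟨g, hg, t, ht, rfl⟩ := hT hv
    refine ⟨g, hg, t, Finset.mem_filter.mpr ⟨ht, ?_⟩, rfl⟩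
    simpa using hinv g⁻¹ (K.inv_mem hg) _ hv

end Subgroup

namespace SimpleGraph

variable {V H : Type*} [Group H] [MulAction H V] {Y : SimpleGraph V} {K : Subgroup H}

theorem nbhd_finite (hlf : ∀ v : V, (Y.neighborSet v).Finite) {W : Set V} (hW : W.Finite) :
    (Y.nbhd W).Finite :=
  (hW.biUnion fun w _ => hlf w).subset fun _ ⟨_, hw, hvw⟩ => mem_biUnion hw hvw.symm

theorem iterate_union_nbhd_finite (hlf : ∀ v : V, (Y.neighborSet v).Finite) {W : Set V}
    (hW : W.Finite) (n : ℕ) : ((fun W => W ∪ Y.nbhd W)^[n] W).Finite := by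
  induction n with
  | zero => exact hW
  | succ n ih =>
    rw [iterate_succ_apply']
    exact ih.union (nbhd_finite hlf ih)

theorem Walk.mem_iterate_union_nbhd {v w : V} (p : Y.Walk v w) :
    v ∈ (fun W => W ∪ Y.nbhd W)^[p.length] {w} := by
  induction p with
  | nil => exact mem_singleton _
  | cons hab p ih =>
    rw [Walk.length_cons, iterate_succ_apply']
    exact Or.inr ⟨_, ih, hab⟩

theorem Connected.countable_of_finite_neighborSet (hconn : Y.Connected)
    (hlf : ∀ v : V, (Y.neighborSet v).Finite) : Countable V := by
  obtain ⟨r⟩ := hconn.nonempty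
  refine countable_univ_iff.mp ((countable_iUnion fun n =>
    (iterate_union_nbhd_finite hlf (finite_singleton r) n).countable).mono fun v _ => ?_)
  exact mem_iUnion.mpr ⟨_, (hconn v r).some.mem_iterate_union_nbhd⟩

theorem Walk.exists_reachable_mem_nbhd {A : Set V} {v w : V} (p : Y.Walk v w) (hv : v ∉ A)
    (hw : w ∈ A) : ∃ x : ↥Aᶜ, x.1 ∈ Y.nbhd A ∧ (Y.induce Aᶜ).Reachable ⟨v, hv⟩ x := by
  induction p with
  | nil => exact absurd hw hv
  | @cons a b _ hab p ih =>
    by_cases hb : b ∈ A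
    · exact ⟨⟨a, hv⟩, ⟨b, hb, hab⟩, Reachable.refl _⟩
    · obtain ⟨x, hx, hr⟩ := ih hb hw
      exact ⟨x, hx, (Adj.reachable (G := Y.induce Aᶜ) (u := ⟨a, hv⟩) (v := ⟨b, hb⟩) hab).trans hr⟩

theorem Reachable.induce_of_adj_closed {W W' : Set V} {u w : W}
    (h : (Y.induce W).Reachable u w) (hu : u.1 ∈ W')
    (hW' : ∀ x y : W, (Y.induce W).Adj x y → x.1 ∈ W' → y.1 ∈ W') :
    ∃ hw : w.1 ∈ W', (Y.induce W').Reachable ⟨u, hu⟩ ⟨w, hw⟩ := by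
  obtain ⟨p⟩ := h
  induction p with
  | nil => exact ⟨hu, Reachable.refl _⟩
  | @cons a b _ hab p ih =>
    have hb := hW' a b hab hu
    obtain ⟨hc, hr⟩ := ih hb
    exact ⟨hc, (Adj.reachable (G := Y.induce W') (u := ⟨a, hu⟩) (v := ⟨b, hb⟩) hab).trans hr⟩

theorem mem_image_val_supp_connectedComponentMk {W : Set V} {x : W} {w : V} :
    w ∈ Subtype.val '' ((Y.induce W).connectedComponentMk x).supp ↔
      ∃ hw : w ∈ W, (Y.induce W).Reachable x ⟨w, hw⟩ := by
  constructor
  · rintro ⟨⟨w, hw⟩, h, rfl⟩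
    exact ⟨hw, (ConnectedComponent.eq.mp h).symm⟩
  · rintro ⟨hw, h⟩
    exact ⟨⟨w, hw⟩, ConnectedComponent.eq.mpr h.symm, rfl⟩

theorem ConnectedComponent.map_inclHom_map_inclHom {W₁ W₂ W₃ : Set V} (h₁ : W₁ ⊆ W₂)
    (h₂ : W₂ ⊆ W₃) (c : (Y.induce W₁).ConnectedComponent) :
    (c.map (Y.inclHom h₁)).map (Y.inclHom h₂) = c.map (Y.inclHom (h₁.trans h₂)) :=
  c.ind fun _ => rfl

theorem ConnectedComponent.map_inclHom_self {W : Set V} (h : W ⊆ W)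
    (c : (Y.induce W).ConnectedComponent) : c.map (Y.inclHom h) = c :=
  c.ind fun _ => rfl

theorem Reachable.smul_induce (haut : ∀ (g : H) (u v : V), Y.Adj (g • u) (g • v) ↔ Y.Adj u v)
    {W : Set V} {g : H} (hg : ∀ v ∈ W, g • v ∈ W) {x y : W} (h : (Y.induce W).Reachable x y) :
    (Y.induce W).Reachable ⟨g • x.1, hg _ x.2⟩ ⟨g • y.1, hg _ y.2⟩ :=
  h.map (G' := Y.induce W)
    { toFun := fun x => ⟨g • x.1, hg _ x.2⟩, map_rel' := fun h => (haut g _ _).mpr h }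

variable (Y K) in
def boundedPart (W : Set V) : Set V :=
  {v | ∃ hv : v ∈ W,
    K.bddSet (Subtype.val '' ((Y.induce W).connectedComponentMk ⟨v, hv⟩).supp)}

theorem Reachable.mem_boundedPart {W : Set V} {u w : W} (h : (Y.induce W).Reachable u w)
    (hu : u.1 ∈ boundedPart Y K W) : w.1 ∈ boundedPart Y K W := by
  obtain ⟨_, hbdd⟩ := hu
  exact ⟨w.2, ConnectedComponent.sound h.symm ▸ hbdd⟩

theorem bddSet_of_mem_boundedPart {W : Set V} {c : (Y.induce W).ConnectedComponent} {w : V}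
    (hwc : w ∈ Subtype.val '' c.supp) (hw : w ∈ boundedPart Y K W) :
    K.bddSet (Subtype.val '' c.supp) := by
  obtain ⟨x, hxc, rfl⟩ := hwc
  obtain ⟨_, hbdd⟩ := hw
  rwa [← (ConnectedComponent.mem_supp_iff c x).mp hxc]

theorem smul_mem_boundedPart (haut : ∀ (g : H) (u v : V), Y.Adj (g • u) (g • v) ↔ Y.Adj u v)
    {W : Set V} (hW : ∀ g ∈ K, ∀ v ∈ W, g • v ∈ W) {g : H} (hg : g ∈ K) {v : V}
    (hv : v ∈ boundedPart Y K W) : g • v ∈ boundedPart Y K W := by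
  obtain ⟨hvW, T, hT⟩ := hv
  refine ⟨hW g hg v hvW, T, fun w hw => ?_⟩
  obtain ⟨hwW, hr⟩ := mem_image_val_supp_connectedComponentMk.mp hw
  have hr' := hr.smul_induce haut (hW _ (K.inv_mem hg))
  rw [show (⟨g⁻¹ • g • v, _⟩ : W) = ⟨v, hvW⟩ from Subtype.ext (inv_smul_smul g v)] at hr'
  have := hT (mem_image_val_supp_connectedComponentMk.mpr ⟨_, hr'⟩)
  exact (K.smul_mem_satSet_iff (K.inv_mem hg)).mp this

theorem exists_smul_mem_supp_of_mem_nbhd (hconn : Y.Connected)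
    (haut : ∀ (g : H) (u v : V), Y.Adj (g • u) (g • v) ↔ Y.Adj u v) {S : Set V}
    (hS : S.Nonempty) {v : V} (hv : v ∉ K.satSet S) :
    ∃ g ∈ K, ∃ x : ↥(K.satSet S)ᶜ, x.1 ∈ Y.nbhd S ∧
      g • v ∈ Subtype.val '' ((Y.induce (K.satSet S)ᶜ).connectedComponentMk x).supp := by
  obtain ⟨s, hs⟩ := hS
  obtain ⟨⟨x, hx⟩, ⟨_, ⟨g, hg, t, ht, rfl⟩, hxt⟩, hr⟩ :=
    (hconn v s).some.exists_reachable_mem_nbhd hv (K.subset_satSet hs)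
  have hinv : ∀ v ∈ (K.satSet S)ᶜ, g⁻¹ • v ∈ (K.satSet S)ᶜ :=
    fun _ => K.smul_mem_compl_satSet (K.inv_mem hg)
  refine ⟨g⁻¹, K.inv_mem hg, ⟨g⁻¹ • x, hinv x hx⟩, ⟨t, ht, ?_⟩, ?_⟩
  · simpa using (haut g⁻¹ x (g • t)).mpr hxt
  · exact mem_image_val_supp_connectedComponentMk.mpr ⟨_, (hr.smul_induce haut hinv).symm⟩

theorem exists_finset_satSet_eq_union_boundedPart (hconn : Y.Connected)
    (hlf : ∀ v : V, (Y.neighborSet v).Finite)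
    (haut : ∀ (g : H) (u v : V), Y.Adj (g • u) (g • v) ↔ Y.Adj u v) {S : Finset V}
    (hS : S.Nonempty) :
    ∃ D : Finset V, S ⊆ D ∧
      K.satSet (D : Set V) = K.satSet (S : Set V) ∪ boundedPart Y K (K.satSet (S : Set V))ᶜ := by
  classical
  set W := (K.satSet (S : Set V))ᶜ
  have hW : ∀ g ∈ K, ∀ v ∈ W, g • v ∈ W := fun _ hg _ => K.smul_mem_compl_satSet hg
  set I := (Y.induce W).connectedComponentMk '' {x | x.1 ∈ Y.nbhd S} ∩
    {c | K.bddSet (Subtype.val '' c.supp)}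
  have hI : I.Finite := Finite.inter_of_left
    (((nbhd_finite hlf S.finite_toSet).preimage Subtype.val_injective.injOn).image _) _
  have hbdd : K.bddSet (boundedPart Y K W) := by
    obtain ⟨T, hT⟩ := K.bddSet_satSet (K.bddSet_biUnion hI fun c hc => hc.2)
    refine ⟨T, fun b hb => hT ?_⟩
    obtain ⟨g, hg, x, hxS, hgb⟩ :=
      exists_smul_mem_supp_of_mem_nbhd hconn haut (Finset.coe_nonempty.mpr hS) hb.1
    have hxI : _ ∈ I := ⟨mem_image_of_mem _ hxS,
      bddSet_of_mem_boundedPart hgb (smul_mem_boundedPart haut hW hg hb)⟩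
    exact (K.smul_mem_satSet_iff hg).mp (K.subset_satSet (mem_biUnion hxI hgb))
  obtain ⟨T, hT⟩ := K.exists_finset_satSet_eq (fun _ hg _ => smul_mem_boundedPart haut hW hg) hbdd
  refine ⟨S ∪ T, Finset.subset_union_left, ?_⟩
  rw [Finset.coe_union, K.satSet_union, hT]

theorem not_bddSet_of_satSet_eq_union_boundedPart {A D : Finset V}
    (hD : K.satSet (D : Set V) = K.satSet (A : Set V) ∪ boundedPart Y K (K.satSet (A : Set V))ᶜ)
    (c : (Y.induce (K.satSet (D : Set V))ᶜ).ConnectedComponent) :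
    ¬ K.bddSet (Subtype.val '' c.supp) := by
  have mem_compl_iff (v : V) : v ∈ (K.satSet (D : Set V))ᶜ ↔
      v ∈ (K.satSet (A : Set V))ᶜ ∧ v ∉ boundedPart Y K (K.satSet (A : Set V))ᶜ := by
    rw [hD, compl_union, mem_inter_iff, mem_compl_iff (boundedPart _ _ _)]
  rintro ⟨T, hT⟩
  obtain ⟨⟨v, hvD⟩, rfl⟩ := c.exists_rep
  obtain ⟨hvA, hvB⟩ := (mem_compl_iff v).mp hvD
  refine hvB ⟨hvA, T, fun w hw => hT ?_⟩
  obtain ⟨hwA, hr⟩ := mem_image_val_supp_connectedComponentMk.mp hw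
  -- the bounded part is a union of whole components of `V ∖ K•A`, so walks avoid it
  obtain ⟨hwD, hr'⟩ := hr.induce_of_adj_closed hvD fun x y hxy hx =>
    (mem_compl_iff y).mpr ⟨y.2, fun hy => ((mem_compl_iff x).mp hx).2
      ((Adj.reachable hxy).symm.mem_boundedPart hy)⟩
  exact mem_image_val_supp_connectedComponentMk.mpr ⟨hwD, hr'⟩

theorem exists_superset_forall_not_bddSet (hconn : Y.Connected)
    (hlf : ∀ v : V, (Y.neighborSet v).Finite)
    (haut : ∀ (g : H) (u v : V), Y.Adj (g • u) (g • v) ↔ Y.Adj u v) {S : Finset V}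
    (hS : S.Nonempty) :
    ∃ D : Finset V, S ⊆ D ∧ ∀ c : (Y.induce (K.satSet (D : Set V))ᶜ).ConnectedComponent,
      ¬ K.bddSet (Subtype.val '' c.supp) := by
  obtain ⟨D, hSD, hD⟩ := exists_finset_satSet_eq_union_boundedPart hconn hlf haut hS
  exact ⟨D, hSD, not_bddSet_of_satSet_eq_union_boundedPart hD⟩

theorem exists_monotone_seq_forall_not_bddSet (hconn : Y.Connected)
    (hlf : ∀ v : V, (Y.neighborSet v).Finite)
    (haut : ∀ (g : H) (u v : V), Y.Adj (g • u) (g • v) ↔ Y.Adj u v) (S₀ : Finset V) :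
    ∃ D : ℕ → Finset V, Monotone D ∧ S₀ ⊆ D 0 ∧ (∀ R : Finset V, ∃ n, R ⊆ D n) ∧
      ∀ n, ∀ c : (Y.induce (K.satSet (D n : Set V))ᶜ).ConnectedComponent,
        ¬ K.bddSet (Subtype.val '' c.supp) := by
  classical
  have := hconn.countable_of_finite_neighborSet hlf
  have := hconn.nonempty
  obtain ⟨enum, henum⟩ := exists_surjective_nat V
  choose F hSF hF using fun S : Finset V =>
    exists_superset_forall_not_bddSet (K := K) hconn hlf haut (Finset.insert_nonempty (enum 0) S)
  let D (n : ℕ) : Finset V := Nat.rec (F S₀) (fun n Dn => F (insert (enum n) Dn)) n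
  have hstep (S : Finset V) : S ⊆ F S := (Finset.subset_insert _ S).trans (hSF S)
  have hmono : Monotone D :=
    monotone_nat_of_le_succ fun n => (Finset.subset_insert _ _).trans (hstep _)
  refine ⟨D, hmono, hstep S₀, fun R => ?_, fun n => ?_⟩
  · choose idx hidx using henum
    refine ⟨R.sup (idx · + 1), fun v hv => ?_⟩
    rw [← hidx v]
    exact hmono (Finset.le_sup (f := (idx · + 1)) hv) (hstep _ (Finset.mem_insert_self _ _))
  · cases n <;> exact hF _

theorem exists_map_eq_of_not_bddSet {S S' : Finset V} (h : S ⊆ S')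
    {c : (Y.induce (K.satSet (S : Set V))ᶜ).ConnectedComponent}
    (hc : ¬ K.bddSet (Subtype.val '' c.supp)) :
    ∃ c' : (Y.induce (K.satSet (S' : Set V))ᶜ).ConnectedComponent,
      c'.map (Y.inclHom (K.compl_satSet_subset_of_subset h)) = c := by
  obtain ⟨_, ⟨⟨v, _⟩, hvc, rfl⟩, hvS'⟩ := not_subset.mp fun hsub => hc ⟨S', hsub⟩
  exact ⟨(Y.induce _).connectedComponentMk ⟨v, hvS'⟩, hvc⟩

end SimpleGraph

theorem exists_seq_of_surjective {X : ℕ → Type*} (π : ∀ n, X (n + 1) → X n)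
    (hπ : ∀ n, Surjective (π n)) (x : X 0) :
    ∃ s : ∀ n, X n, s 0 = x ∧ ∀ n, π n (s (n + 1)) = s n := by
  choose σ hσ using hπ
  exact ⟨fun n => Nat.rec x (fun n y => σ n y) n, rfl, fun n => hσ n _⟩

namespace filteredEnds

variable {V H : Type*} [Group H] [MulAction H V] {Y : SimpleGraph V} {K : Subgroup H}

theorem exists_apply_eq_of_compatible {Q : ℕ → Finset V} (hQ : Monotone Q)
    (hcof : ∀ R : Finset V, ∃ n, R ⊆ Q n)
    (s : ∀ n, (Y.induce (K.satSet (Q n : Set V))ᶜ).ConnectedComponent)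
    (hs : ∀ n,
      (s (n + 1)).map (Y.inclHom (K.compl_satSet_subset_of_subset (hQ n.le_succ))) = s n) :
    ∃ f : filteredEnds Y K, ∀ n, f.1 (Q n) = s n := by
  classical
  have hdown {m n : ℕ} (hmn : m ≤ n) :
      (s n).map (Y.inclHom (K.compl_satSet_subset_of_subset (hQ hmn))) = s m := by
    induction n, hmn using Nat.le_induction with
    | base => exact ConnectedComponent.map_inclHom_self _ _
    | succ n hmn ih => rw [← ih, ← hs n, ConnectedComponent.map_inclHom_map_inclHom]
  let f (R : Finset V) := (s (Nat.find (hcof R))).map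
    (Y.inclHom (K.compl_satSet_subset_of_subset (Nat.find_spec (hcof R))))
  have hf (R : Finset V) (n : ℕ) (hR : R ⊆ Q n) :
      (s n).map (Y.inclHom (K.compl_satSet_subset_of_subset hR)) = f R := by
    simp only [f]
    rw [← hdown (Nat.find_min' (hcof R) hR), ConnectedComponent.map_inclHom_map_inclHom]
  refine ⟨⟨f, fun R R' h => ?_⟩, fun n => (hf (Q n) n subset_rfl).symm.trans ?_⟩
  · rw [ConnectedComponent.map_inclHom_map_inclHom]
    exact hf R _ (h.trans (Nat.find_spec (hcof R')))
  · exact ConnectedComponent.map_inclHom_self _ _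

theorem surjective_apply_of_forall_not_bddSet {D : ℕ → Finset V} (hD : Monotone D)
    (hcof : ∀ R : Finset V, ∃ n, R ⊆ D n)
    (hunb : ∀ n, ∀ c : (Y.induce (K.satSet (D n : Set V))ᶜ).ConnectedComponent,
      ¬ K.bddSet (Subtype.val '' c.supp)) (n : ℕ) :
    Surjective fun f : filteredEnds Y K => f.1 (D n) := by
  intro c
  have hD' : Monotone fun k => D (n + k) := fun _ _ h => hD (Nat.add_le_add_left h n)
  obtain ⟨s, rfl, hs⟩ := exists_seq_of_surjective
    (fun k => ConnectedComponent.map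
      (Y.inclHom (K.compl_satSet_subset_of_subset (hD' k.le_succ))))
    (fun k c => exists_map_eq_of_not_bddSet (hD' k.le_succ) (hunb (n + k) c)) c
  obtain ⟨f, hf⟩ := exists_apply_eq_of_compatible hD'
    (fun R => (hcof R).imp fun m hm => hm.trans (hD (Nat.le_add_left m n))) s hs
  exact ⟨f, hf 0⟩

theorem exists_injective_apply [Finite (filteredEnds Y K)] :
    ∃ S₀ : Finset V, ∀ S, S₀ ⊆ S → Injective fun f : filteredEnds Y K => f.1 S := by
  classical
  have : ∀ p : filteredEnds Y K × filteredEnds Y K,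
      ∃ R : Finset V, p.1.1 R = p.2.1 R → p.1 = p.2 := by
    rintro ⟨f, g⟩
    by_cases hfg : f = g
    · exact ⟨∅, fun _ => hfg⟩
    obtain ⟨R, hR⟩ : ∃ R, f.1 R ≠ g.1 R := by
      by_contra! h
      exact hfg (Subtype.ext (funext h))
    exact ⟨R, fun h => absurd h hR⟩
  choose R hR using this
  have := Fintype.ofFinite (filteredEnds Y K)
  refine ⟨Finset.univ.biUnion R, fun S hS f g hfg => hR (f, g) ?_⟩
  have hsub : R (f, g) ⊆ S := (Finset.subset_biUnion_of_mem R (Finset.mem_univ _)).trans hS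
  rw [← f.2 hsub, ← g.2 hsub]
  exact congrArg _ hfg

end filteredEnds

theorem stmt7_general {V H : Type} [Group H] [MulAction H V] (Y : SimpleGraph V)
    (hconn : Y.Connected)
    (hlf : ∀ v : V, (Y.neighborSet v).Finite)
    (haut : ∀ (g : H) (u v : V), Y.Adj (g • u) (g • v) ↔ Y.Adj u v)
    (e : ℕ)
    (hE : Cardinal.mk (filteredEnds Y (⊤ : Subgroup H)) = e) :
    ∃ D : ℕ → Finset V,
      (∀ n, D n ⊆ D (n + 1)) ∧
      (⋃ n, (⊤ : Subgroup H).satSet ((D n : Finset V) : Set V)) = Set.univ ∧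
      ∀ n,
        Nat.card ((Y.induce (((⊤ : Subgroup H).satSet ((D n : Finset V) : Set V))ᶜ)).ConnectedComponent) = e ∧
        ∀ c : (Y.induce (((⊤ : Subgroup H).satSet ((D n : Finset V) : Set V))ᶜ)).ConnectedComponent,
          ¬ (⊤ : Subgroup H).bddSet (Subtype.val '' c.supp) := by
  have : Finite (filteredEnds Y (⊤ : Subgroup H)) :=
    Cardinal.mk_lt_aleph0_iff.mp (hE ▸ Cardinal.natCast_lt_aleph0)
  obtain ⟨S₀, hS₀⟩ := filteredEnds.exists_injective_apply (Y := Y) (K := (⊤ : Subgroup H))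
  obtain ⟨D, hmono, hS₀D, hcof, hunb⟩ :=
    exists_monotone_seq_forall_not_bddSet (K := ⊤) hconn hlf haut S₀
  refine ⟨D, fun n => hmono n.le_succ, eq_univ_of_forall fun v => ?_, fun n => ⟨?_, hunb n⟩⟩
  · obtain ⟨n, hn⟩ := hcof {v}
    exact mem_iUnion.mpr ⟨n, Subgroup.subset_satSet _ (hn (Finset.mem_singleton_self v))⟩
  · have hbij : Bijective fun f : filteredEnds Y ⊤ => f.1 (D n) :=
      ⟨hS₀ _ (hS₀D.trans (hmono n.zero_le)),
        filteredEnds.surjective_apply_of_forall_not_bddSet hmono hcof hunb n⟩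
    rw [← Nat.card_eq_of_bijective _ hbij, Nat.card, hE, Cardinal.toNat_natCast]

/-- If `e(Y,H) = e` is finite and nonzero, there is an exhausting increasing sequence of finite
sets `Dₙ` such that the complement of `H•Dₙ` always has exactly `e` connected components,
all of them `H`-unbounded. -/
theorem stmt7 {V H : Type} [Group H] [MulAction H V] (Y : SimpleGraph V)
    (hconn : Y.Connected)
    (hlf : ∀ v : V, (Y.neighborSet v).Finite)
    (hfree : ∀ (g : H) (v : V), g • v = v → g = 1)
    (haut : ∀ (g : H) (u v : V), Y.Adj (g • u) (g • v) ↔ Y.Adj u v)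
    (e : ℕ) (he : e ≠ 0)
    (hE : Cardinal.mk (filteredEnds Y (⊤ : Subgroup H)) = e) :
    ∃ D : ℕ → Finset V,
      (∀ n, D n ⊆ D (n + 1)) ∧
      (⋃ n, (⊤ : Subgroup H).satSet ((D n : Finset V) : Set V)) = Set.univ ∧
      ∀ n,
        Nat.card ((Y.induce (((⊤ : Subgroup H).satSet ((D n : Finset V) : Set V))ᶜ)).ConnectedComponent) = e ∧
        ∀ c : (Y.induce (((⊤ : Subgroup H).satSet ((D n : Finset V) : Set V))ᶜ)).ConnectedComponent,
          ¬ (⊤ : Subgroup H).bddSet (Subtype.val '' c.supp) :=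
  stmt7_general Y hconn hlf haut e hE
end

section
/- Let Y be a connected simple graph with vertex set V, let W ⊆ V be a subset such that V ∖ W is nonempty and the subgraph of Y induced on V ∖ W has only finitely many connected components, and let C ⊆ W be a finite subset. Then there exists a finite set Ĉ with C ⊆ Ĉ ⊆ W ∪ N(W), where N(W) denotes the set of vertices of Y adjacent to some vertex of W, such that the subgraph of Y induced on Ĉ ∪ (V ∖ W) is connected. -/
open SimpleGraph

private lemma walk_reach {V : Type} {Y : SimpleGraph V} {S : Set V} {v : V} :
    ∀ {u : V} (p : Y.Walk u v), (∀ x ∈ p.support, x ∈ S) →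
      ∀ (hu : u ∈ S) (hv : v ∈ S), (Y.induce S).Reachable ⟨u, hu⟩ ⟨v, hv⟩ := by
  intro u p
  induction p with
  | nil => exact fun _ hu hv => Reachable.refl _
  | @cons a b c hadj q ih =>
    intro hsup hu hv
    have hb : b ∈ S := hsup b (by simp [SimpleGraph.Walk.support_cons])
    have h1 : (Y.induce S).Adj ⟨a, hu⟩ ⟨b, hb⟩ := hadj
    exact h1.reachable.trans
      (ih (fun x hx => hsup x (by simp [SimpleGraph.Walk.support_cons, hx])) hb hv)

/-- In a connected graph, if `V ∖ W` is nonempty and has finitely many components and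
`C ⊆ W` is finite, then there is a finite `Ĉ` with `C ⊆ Ĉ ⊆ W ∪ N(W)` such that the
subgraph induced on `Ĉ ∪ (V ∖ W)` is connected. -/
theorem stmt9 {V : Type} (Y : SimpleGraph V) (hconn : Y.Connected)
    (W : Set V) (hne : Wᶜ.Nonempty)
    (hcomp : Finite ((Y.induce Wᶜ).ConnectedComponent))
    (C : Set V) (hCW : C ⊆ W) (hC : C.Finite) :
    ∃ Chat : Set V, Chat.Finite ∧ C ⊆ Chat ∧ Chat ⊆ W ∪ Y.nbhd W ∧
      (Y.induce (Chat ∪ Wᶜ)).Connected := by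
  classical
  obtain ⟨v₀, hv₀⟩ := hne
  -- choose a walk from every vertex to v₀
  have hw : ∀ u : V, Y.Walk u v₀ := fun u => (hconn u v₀).some
  set w := hw with hwdef
  -- representatives of components of Wᶜ
  let Comp := (Y.induce Wᶜ).ConnectedComponent
  let rep : Comp → V := fun c => (c.out : V)
  -- base set of walk sources
  let B : Set V := C ∪ Set.range rep
  have hBfin : B.Finite := hC.union (Set.finite_range rep)
  -- the candidate set
  let Chat : Set V := {x | x ∈ W ∧ ∃ u ∈ B, x ∈ (w u).support}
  have hChatW : Chat ⊆ W := fun x hx => hx.1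
  have hChatfin : Chat.Finite := by
    apply Set.Finite.subset (Set.Finite.biUnion hBfin
      (fun u _ => (w u).support.finite_toSet))
    rintro x ⟨-, u, hu, hx⟩
    exact Set.mem_biUnion hu hx
  refine ⟨Chat, hChatfin, ?_, fun x hx => Or.inl (hChatW hx), ?_⟩
  · intro c hc
    exact ⟨hCW hc, c, Or.inl hc, (w c).start_mem_support⟩
  set S : Set V := Chat ∪ Wᶜ with hS
  -- all chosen walks stay inside S
  have hwalkS : ∀ u ∈ B, ∀ x ∈ (w u).support, x ∈ S := by
    intro u hu x hx
    by_cases hxW : x ∈ W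
    · exact Or.inl ⟨hxW, u, hu, hx⟩
    · exact Or.inr hxW
  have hv₀S : v₀ ∈ S := Or.inr hv₀
  have : Nonempty (S : Set V) := ⟨⟨v₀, hv₀S⟩⟩
  refine ⟨?_⟩
  -- reachability to v₀ for any vertex of S
  have key : ∀ x : S, (Y.induce S).Reachable x ⟨v₀, hv₀S⟩ := by
    rintro ⟨x, hx⟩
    rcases hx with hx | hx
    · -- x is on some walk w u, u ∈ B; drop along the walk
      obtain ⟨-, u, hu, hxsupp⟩ := hx
      have hsub : ∀ y ∈ ((w u).dropUntil x hxsupp).support, y ∈ S :=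
        fun y hy => hwalkS u hu y ((w u).support_dropUntil_subset hxsupp hy)
      exact walk_reach ((w u).dropUntil x hxsupp) hsub _ _
    · -- x ∈ Wᶜ : go to the representative of its component, then along its walk
      let c : Comp := (Y.induce Wᶜ).connectedComponentMk ⟨x, hx⟩
      have hreach : (Y.induce Wᶜ).Reachable ⟨x, hx⟩ c.out :=
        ConnectedComponent.exact (Quot.out_eq c).symm
      have hsub : (Wᶜ : Set V) ⊆ S := Set.subset_union_right
      have h1 : (Y.induce S).Reachable ⟨x, Or.inr hx⟩ ⟨(c.out : V), hsub c.out.2⟩ := by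
        have := hreach.map (Y.inclHom hsub)
        exact this
      have hrB : rep c ∈ B := Or.inr ⟨c, rfl⟩
      have hsub2 : ∀ y ∈ (w (rep c)).support, y ∈ S := hwalkS _ hrB
      exact h1.trans (walk_reach (w (rep c)) hsub2
        (hsub2 _ (w (rep c)).start_mem_support) hv₀S)
  exact fun a b => (key a).trans (key b).symm
end

section
/- Let Y be a connected, locally finite simple graph with vertex set V and let H be a group acting freely on V by automorphisms of Y. Suppose the number of filtered ends e(Y,H) is infinite. Then there exists an increasing sequence of finite subsets C₁ ⊆ C₂ ⊆ ⋯ of V with ⋃ₙ H•Cₙ = V such that for every n, every connected component of the subgraph of Y induced on V ∖ H•Cₙ is H-unbounded, and the number of connected components of V ∖ H•Cₙ₊₁ is at least the number of connected components of V ∖ H•Cₙ. -/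
open SimpleGraph

section Aux
variable {V H : Type} [Group H] [MulAction H V]

lemma mem_satTop {S : Set V} {v : V} :
    v ∈ (⊤ : Subgroup H).satSet S ↔ ∃ g : H, ∃ s ∈ S, g • s = v := by
  constructor
  · rintro ⟨g, -, s, hs, rfl⟩; exact ⟨g, s, hs, rfl⟩
  · rintro ⟨g, s, hs, rfl⟩; exact ⟨g, trivial, s, hs, rfl⟩

lemma subset_satTop {S : Set V} : S ⊆ (⊤ : Subgroup H).satSet S :=
  fun s hs => ⟨1, trivial, s, hs, one_smul _ _⟩

lemma smul_mem_satTop {S : Set V} {v : V} (g : H) (h : v ∈ (⊤ : Subgroup H).satSet S) :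
    g • v ∈ (⊤ : Subgroup H).satSet S := by
  obtain ⟨k, s, hs, rfl⟩ := mem_satTop.1 h
  exact mem_satTop.2 ⟨g * k, s, hs, (mul_smul g k s).symm ▸ rfl⟩

lemma smul_mem_satTop_iff {S : Set V} {v : V} (g : H) :
    g • v ∈ (⊤ : Subgroup H).satSet S ↔ v ∈ (⊤ : Subgroup H).satSet S :=
  ⟨fun h => by simpa using smul_mem_satTop g⁻¹ h, smul_mem_satTop g⟩

lemma bddSet_top_mono {A B : Set V} (h : A ⊆ B) (hB : (⊤ : Subgroup H).bddSet B) :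
    (⊤ : Subgroup H).bddSet A := by
  obtain ⟨T, hT⟩ := hB; exact ⟨T, h.trans hT⟩

lemma bdd_of_smul_subset {A B : Set V} (g : H) (hAB : ∀ b ∈ B, g • b ∈ A)
    (hA : (⊤ : Subgroup H).bddSet A) : (⊤ : Subgroup H).bddSet B := by
  obtain ⟨T, hT⟩ := hA
  exact ⟨T, fun b hb => (smul_mem_satTop_iff g).1 (hT (hAB b hb))⟩

variable (Y : SimpleGraph V)

def smulHom (g : H) {W : Set V} (hW : ∀ v ∈ W, g • v ∈ W)
    (haut : ∀ (g : H) (u v : V), Y.Adj (g • u) (g • v) ↔ Y.Adj u v) :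
    Y.induce W →g Y.induce W where
  toFun x := ⟨g • x.val, hW _ x.2⟩
  map_rel' := fun h => (haut g _ _).2 h

lemma reach_smul (haut : ∀ (g : H) (u v : V), Y.Adj (g • u) (g • v) ↔ Y.Adj u v)
    {W : Set V} (g : H) (hW : ∀ v ∈ W, g • v ∈ W) {x y x' y' : ↥W}
    (hx : x'.val = g • x.val) (hy : y'.val = g • y.val)
    (h : (Y.induce W).Reachable x y) : (Y.induce W).Reachable x' y' := by
  have hh := h.map (smulHom Y g hW haut)
  have ex : x' = smulHom Y g hW haut x := Subtype.ext hx
  have ey : y' = smulHom Y g hW haut y := Subtype.ext hy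
  rw [ex, ey]; exact hh

lemma exists_boundary {W : Set V} :
    ∀ {a b : V} (_ : Y.Walk a b) (ha : a ∈ W) (_ : b ∉ W),
    ∃ (u x : V) (hu : u ∈ W), x ∉ W ∧ Y.Adj u x ∧
      (Y.induce W).Reachable ⟨a, ha⟩ ⟨u, hu⟩ := by
  intro a b p
  induction p with
  | nil => intro ha hb; exact absurd ha hb
  | @cons a c b h p ih =>
    intro ha hb
    by_cases hc : c ∈ W
    · obtain ⟨u, x, hu, hx, hadj, hr⟩ := ih hc hb
      exact ⟨u, x, hu, hx, hadj,
        (Adj.reachable (show (Y.induce W).Adj ⟨a, ha⟩ ⟨c, hc⟩ from h)).trans hr⟩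
    · exact ⟨a, c, ha, hc, h, Reachable.refl _⟩

lemma reach_transfer {W W' : Set V}
    (hclosed : ∀ x y : ↥W, (Y.induce W).Adj x y → x.val ∈ W' → y.val ∈ W') :
    ∀ {x y : ↥W} (_ : (Y.induce W).Walk x y) (hx : x.val ∈ W'),
    ∃ hy : y.val ∈ W', (Y.induce W').Reachable ⟨x.val, hx⟩ ⟨y.val, hy⟩ := by
  intro x y p
  induction p with
  | nil => intro hx; exact ⟨hx, Reachable.refl _⟩
  | @cons a c b h p ih =>
    intro hx
    have hm := hclosed _ _ h hx
    obtain ⟨hy, hr⟩ := ih hm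
    exact ⟨hy, (Adj.reachable
      (show (Y.induce W').Adj ⟨a.val, hx⟩ ⟨c.val, hm⟩ from h)).trans hr⟩

/-- The vertex set of the connected component of `x` in the induced subgraph on `W`. -/
def cSupp (W : Set V) (x : ↥W) : Set V :=
  Subtype.val '' ((Y.induce W).connectedComponentMk x).supp

lemma mem_cSupp {W : Set V} {x : ↥W} {a : V} :
    a ∈ cSupp Y W x ↔ ∃ h : a ∈ W, (Y.induce W).Reachable ⟨a, h⟩ x := by
  constructor
  · rintro ⟨⟨b, hb⟩, hbsupp, rfl⟩
    exact ⟨hb, ConnectedComponent.exact ((ConnectedComponent.mem_supp_iff _ _).1 hbsupp)⟩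
  · rintro ⟨h, hr⟩
    exact ⟨⟨a, h⟩, (ConnectedComponent.mem_supp_iff _ _).2 (ConnectedComponent.sound hr), rfl⟩

variable (H) in
/-- The union of the `⊤`-bounded components of the induced subgraph on `W`. -/
def bddU (W : Set V) : Set V :=
  {v | ∃ h : v ∈ W, (⊤ : Subgroup H).bddSet (cSupp Y W ⟨v, h⟩)}

lemma mem_bddU {W : Set V} {v : V} :
    v ∈ bddU H Y W ↔ ∃ h : v ∈ W, (⊤ : Subgroup H).bddSet (cSupp Y W ⟨v, h⟩) := Iff.rfl

lemma hullLemma (hconn : Y.Connected)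
    (hlf : ∀ v : V, (Y.neighborSet v).Finite)
    (haut : ∀ (g : H) (u v : V), Y.Adj (g • u) (g • v) ↔ Y.Adj u v)
    (S : Finset V) (hS : S.Nonempty) :
    ∃ C : Finset V, S ⊆ C ∧
      ∀ c : (Y.induce (((⊤ : Subgroup H).satSet ((C : Finset V) : Set V))ᶜ)).ConnectedComponent,
        ¬ (⊤ : Subgroup H).bddSet (Subtype.val '' c.supp) := by
  classical
  obtain ⟨s₀, hs₀⟩ := hS
  have hΩinv : ∀ (g : H), ∀ v ∈ (((⊤ : Subgroup H).satSet (S : Set V))ᶜ),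
      g • v ∈ (((⊤ : Subgroup H).satSet (S : Set V))ᶜ) :=
    fun g v hv h => hv ((smul_mem_satTop_iff g).1 h)
  set Ω : Set V := ((⊤ : Subgroup H).satSet (S : Set V))ᶜ with hΩdef
  -- the union of bounded components is invariant
  have bddU_smul : ∀ (g : H), ∀ v ∈ bddU H Y Ω, g • v ∈ bddU H Y Ω := by
    rintro g v ⟨h, hbdd⟩
    refine ⟨hΩinv g v h, ?_⟩
    refine bdd_of_smul_subset g⁻¹ ?_ hbdd
    intro b hb
    rw [mem_cSupp] at hb
    obtain ⟨hbΩ, hr⟩ := hb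
    rw [mem_cSupp]
    exact ⟨hΩinv g⁻¹ b hbΩ,
      reach_smul Y haut g⁻¹ (fun w hw => hΩinv g⁻¹ w hw) rfl (inv_smul_smul g v).symm hr⟩
  -- choice of bounding sets for bounded components
  let Tw : V → Finset V := fun w =>
    if h : w ∈ bddU H Y Ω then h.choose_spec.choose else ∅
  have hTw : ∀ w (h : w ∈ bddU H Y Ω),
      cSupp Y Ω ⟨w, h.choose⟩ ⊆ (⊤ : Subgroup H).satSet ↑(Tw w) := by
    intro w h
    rw [show Tw w = h.choose_spec.choose from dif_pos h]
    exact h.choose_spec.choose_spec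
  -- finite set of neighbours of S
  let N : Finset V := S.biUnion (fun s => (hlf s).toFinset)
  -- all bounded components lie in the saturation of a finite set
  have hbddUsub : bddU H Y Ω ⊆ (⊤ : Subgroup H).satSet ↑(N.biUnion Tw) := by
    rintro v ⟨hvΩ, hvbdd⟩
    have hs₀' : s₀ ∉ Ω := fun hc => hc (subset_satTop hs₀)
    obtain ⟨u, x, hu, hx, hadj, hreach⟩ := exists_boundary Y ((hconn v s₀).some) hvΩ hs₀'
    obtain ⟨g, s, hs, rfl⟩ := mem_satTop.1 (Set.not_notMem.1 hx)
    have hu' : g⁻¹ • u ∈ Ω := hΩinv g⁻¹ u hu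
    have hadj' : Y.Adj (g⁻¹ • u) s := by
      have := (haut g⁻¹ u (g • s)).2 hadj
      rwa [inv_smul_smul] at this
    have hu'N : g⁻¹ • u ∈ N :=
      Finset.mem_biUnion.2 ⟨s, hs, (hlf s).mem_toFinset.2 hadj'.symm⟩
    have hu'bdd : g⁻¹ • u ∈ bddU H Y Ω := by
      refine ⟨hu', ?_⟩
      refine bdd_of_smul_subset g ?_ hvbdd
      intro b hb
      rw [mem_cSupp] at hb
      obtain ⟨hbΩ, hrb⟩ := hb
      rw [mem_cSupp]
      refine ⟨hΩinv g b hbΩ, ?_⟩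
      exact (reach_smul Y haut g (fun w hw => hΩinv g w hw) rfl
        (smul_inv_smul g u).symm hrb).trans hreach.symm
    have hmem : g⁻¹ • v ∈ cSupp Y Ω ⟨g⁻¹ • u, hu'bdd.choose⟩ := by
      rw [mem_cSupp]
      exact ⟨hΩinv g⁻¹ v hvΩ,
        reach_smul Y haut g⁻¹ (fun w hw => hΩinv g⁻¹ w hw) rfl rfl hreach⟩
    have h1 : g⁻¹ • v ∈ (⊤ : Subgroup H).satSet ↑(N.biUnion Tw) :=
      Subgroup.satSet_mono _
        (Finset.coe_subset.2 (Finset.subset_biUnion_of_mem Tw hu'N))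
        (hTw _ hu'bdd hmem)
    have h2 := smul_mem_satTop g h1
    rwa [smul_inv_smul] at h2
  -- the hull
  set hull : Set V := (⊤ : Subgroup H).satSet ↑S ∪ bddU H Y Ω with hhull
  have hullInv : ∀ (g : H), ∀ v ∈ hull, g • v ∈ hull := by
    rintro g v (h | h)
    · exact Or.inl (smul_mem_satTop g h)
    · exact Or.inr (bddU_smul g v h)
  have hullSub : hull ⊆ (⊤ : Subgroup H).satSet ↑(S ∪ N.biUnion Tw) := by
    rintro v (h | h)
    · exact Subgroup.satSet_mono _ (Finset.coe_subset.2 Finset.subset_union_left) h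
    · exact Subgroup.satSet_mono _ (Finset.coe_subset.2 Finset.subset_union_right)
        (hbddUsub h)
  refine ⟨(S ∪ N.biUnion Tw).filter (· ∈ hull), ?_, ?_⟩
  · intro s hsS
    exact Finset.mem_filter.2 ⟨Finset.mem_union_left _ hsS, Or.inl (subset_satTop hsS)⟩
  have hCeq : (⊤ : Subgroup H).satSet ↑((S ∪ N.biUnion Tw).filter (· ∈ hull)) = hull := by
    apply Set.Subset.antisymm
    · rintro v ⟨g, -, c, hc, rfl⟩
      exact hullInv g c (Finset.mem_filter.1 hc).2
    · intro v hv
      obtain ⟨g, t, ht, rfl⟩ := mem_satTop.1 (hullSub hv)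
      have hth : t ∈ hull := by
        have := hullInv g⁻¹ _ hv
        rwa [inv_smul_smul] at this
      exact mem_satTop.2 ⟨g, t, Finset.mem_filter.2 ⟨ht, hth⟩, rfl⟩
  rw [hCeq]
  intro c
  obtain ⟨⟨v, hvmem⟩, rfl⟩ := c.exists_rep
  have hvh : v ∉ hull := hvmem
  have hvΩ : v ∈ Ω := fun hsat => hvh (Or.inl hsat)
  have hnb : ¬ (⊤ : Subgroup H).bddSet (cSupp Y Ω ⟨v, hvΩ⟩) :=
    fun hb => hvh (Or.inr ⟨hvΩ, hb⟩)
  intro hbdd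
  apply hnb
  refine bddSet_top_mono ?_ hbdd
  intro a ha
  rw [mem_cSupp] at ha
  obtain ⟨haΩ, hra⟩ := ha
  have hclosed : ∀ x y : ↥Ω, (Y.induce Ω).Adj x y → x.val ∈ hullᶜ → y.val ∈ hullᶜ := by
    rintro x y hxy hx (hy1 | hy2)
    · exact y.2 hy1
    · obtain ⟨hyΩ, hybdd⟩ := hy2
      apply hx
      refine Or.inr ⟨x.2, bddSet_top_mono ?_ hybdd⟩
      intro b hb
      rw [mem_cSupp] at hb ⊢
      obtain ⟨hbΩ, hrb⟩ := hb
      exact ⟨hbΩ, hrb.trans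
        (Adj.reachable (show (Y.induce Ω).Adj ⟨x.val, x.2⟩ ⟨y.val, hyΩ⟩ from hxy))⟩
  obtain ⟨hah, hr'⟩ := reach_transfer Y hclosed (hra.symm.some) hvh
  exact ⟨⟨a, hah⟩, (ConnectedComponent.mem_supp_iff _ _).2
    (ConnectedComponent.sound hr'.symm), rfl⟩

end Aux


lemma countable_of_conn {V : Type} (Y : SimpleGraph V) (hconn : Y.Connected)
    (hlf : ∀ v : V, (Y.neighborSet v).Finite) : Countable V := by
  obtain ⟨v₀⟩ := hconn.nonempty
  let B : ℕ → Set V := fun n => Nat.rec {v₀} (fun _ Bn => Bn ∪ ⋃ w ∈ Bn, Y.neighborSet w) n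
  have hfin : ∀ n, (B n).Finite := by
    intro n
    induction n with
    | zero => exact Set.finite_singleton v₀
    | succ n ih => exact ih.union (ih.biUnion (fun w _ => hlf w))
  have hcov : ∀ {a b : V}, Y.Walk a b → ∀ n, a ∈ B n → ∃ m, b ∈ B m := by
    intro a b p
    induction p with
    | nil => exact fun n ha => ⟨n, ha⟩
    | @cons a c b h p ih =>
      intro n ha
      exact ih (n + 1) (Or.inr (Set.mem_biUnion ha h))
  have : (Set.univ : Set V).Countable := by
    have hsub : (Set.univ : Set V) ⊆ ⋃ n, B n := by
      intro v _
      obtain ⟨m, hm⟩ := hcov (hconn v₀ v).some 0 rfl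
      exact Set.mem_iUnion.2 ⟨m, hm⟩
    exact Set.Countable.mono hsub (Set.countable_iUnion fun n => (hfin n).countable)
  exact Set.countable_univ_iff.mp this


/-- If `e(Y,H)` is infinite, there is an exhausting increasing sequence of finite sets `Cₙ`
such that each complement `V ∖ H•Cₙ` has only `H`-unbounded components, and the number of
components of `V ∖ H•Cₙ₊₁` is at least that of `V ∖ H•Cₙ`. -/
theorem stmt15 {V H : Type} [Group H] [MulAction H V] (Y : SimpleGraph V)
    (hconn : Y.Connected)
    (hlf : ∀ v : V, (Y.neighborSet v).Finite)
    (hfree : ∀ (g : H) (v : V), g • v = v → g = 1)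
    (haut : ∀ (g : H) (u v : V), Y.Adj (g • u) (g • v) ↔ Y.Adj u v)
    (hinf : Cardinal.aleph0 ≤ Cardinal.mk (filteredEnds Y (⊤ : Subgroup H))) :
    ∃ C : ℕ → Finset V,
      (∀ n, C n ⊆ C (n + 1)) ∧
      (⋃ n, (⊤ : Subgroup H).satSet ((C n : Finset V) : Set V)) = Set.univ ∧
      (∀ n,
        ∀ c : (Y.induce (((⊤ : Subgroup H).satSet ((C n : Finset V) : Set V))ᶜ)).ConnectedComponent,
          ¬ (⊤ : Subgroup H).bddSet (Subtype.val '' c.supp)) ∧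
      (∀ n,
        Cardinal.mk ((Y.induce (((⊤ : Subgroup H).satSet ((C n : Finset V) : Set V))ᶜ)).ConnectedComponent) ≤
        Cardinal.mk ((Y.induce (((⊤ : Subgroup H).satSet ((C (n+1) : Finset V) : Set V))ᶜ)).ConnectedComponent)) := by
  classical
  have hcnt : Countable V := countable_of_conn Y hconn hlf
  have hne : Nonempty V := hconn.nonempty
  obtain ⟨e, he⟩ := exists_surjective_nat V
  have key := hullLemma Y hconn hlf haut
  let F : ∀ S : Finset V, S.Nonempty → Finset V := fun S h => (key S h).choose
  have hF₁ : ∀ S h, S ⊆ F S h := fun S h => (key S h).choose_spec.1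
  have hF₂ : ∀ S h,
      ∀ c : (Y.induce (((⊤ : Subgroup H).satSet (↑(F S h) : Set V))ᶜ)).ConnectedComponent,
        ¬ (⊤ : Subgroup H).bddSet (Subtype.val '' c.supp) :=
    fun S h => (key S h).choose_spec.2
  obtain ⟨C, hCzero, hCsucc⟩ :
      ∃ C : ℕ → Finset V, C 0 = F {e 0} (Finset.singleton_nonempty _) ∧
        ∀ n, C (n + 1) = F (insert (e (n + 1)) (C n)) (Finset.insert_nonempty _ _) :=
    ⟨fun n => Nat.rec (F {e 0} (Finset.singleton_nonempty _))
      (fun n Cn => F (insert (e (n + 1)) Cn) (Finset.insert_nonempty _ _)) n, rfl, fun _ => rfl⟩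
  have hmono : ∀ n, C n ⊆ C (n + 1) := by
    intro n
    rw [hCsucc n]
    exact (Finset.subset_insert _ _).trans (hF₁ (insert (e (n + 1)) (C n)) (Finset.insert_nonempty _ _))
  have hub : ∀ n : ℕ,
      ∀ c : (Y.induce (((⊤ : Subgroup H).satSet (↑(C n) : Set V))ᶜ)).ConnectedComponent,
        ¬ (⊤ : Subgroup H).bddSet (Subtype.val '' c.supp) := by
    intro n
    cases n with
    | zero => rw [hCzero]; exact hF₂ {e 0} (Finset.singleton_nonempty _)
    | succ n => rw [hCsucc n]; exact hF₂ (insert (e (n + 1)) (C n)) (Finset.insert_nonempty _ _)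
  refine ⟨C, hmono, ?_, hub, ?_⟩
  · ext v
    simp only [Set.mem_iUnion, Set.mem_univ, iff_true]
    obtain ⟨n, rfl⟩ := he v
    cases n with
    | zero =>
      refine ⟨0, subset_satTop ?_⟩
      rw [hCzero]
      exact Finset.mem_coe.2 (hF₁ {e 0} (Finset.singleton_nonempty _) (Finset.mem_singleton_self _))
    | succ n =>
      refine ⟨n + 1, subset_satTop ?_⟩
      rw [hCsucc n]
      exact Finset.mem_coe.2 (hF₁ (insert (e (n + 1)) (C n)) (Finset.insert_nonempty _ _) (Finset.mem_insert_self _ _))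
  · intro n
    have hsub : ((⊤ : Subgroup H).satSet (↑(C (n + 1)) : Set V))ᶜ ⊆
        ((⊤ : Subgroup H).satSet (↑(C n) : Set V))ᶜ :=
      Set.compl_subset_compl.mpr (Subgroup.satSet_mono _ (Finset.coe_subset.2 (hmono n)))
    have hns : ∀ c : (Y.induce (((⊤ : Subgroup H).satSet
          (↑(C n) : Set V))ᶜ)).ConnectedComponent,
        ∃ a, a ∈ Subtype.val '' c.supp ∧
          a ∉ (⊤ : Subgroup H).satSet (↑(C (n + 1)) : Set V) := by
      intro c
      by_contra hcon
      push_neg at hcon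
      exact hub n c ⟨C (n + 1), fun a ha => hcon a ha⟩
    choose a ha₁ ha₂ using hns
    apply Cardinal.mk_le_of_injective
      (f := fun c => (Y.induce (((⊤ : Subgroup H).satSet
        (↑(C (n + 1)) : Set V))ᶜ)).connectedComponentMk ⟨a c, ha₂ c⟩)
    intro c₁ c₂ hcc
    have hmapeq : ∀ c, ((Y.induce (((⊤ : Subgroup H).satSet
        (↑(C (n + 1)) : Set V))ᶜ)).connectedComponentMk
          ⟨a c, ha₂ c⟩).map (Y.inclHom hsub) = c := by
      intro c
      rw [ConnectedComponent.map_mk]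
      obtain ⟨x₀, hx₀, hval⟩ := ha₁ c
      have hx : Y.inclHom hsub ⟨a c, ha₂ c⟩ = x₀ := Subtype.ext hval.symm
      rw [hx]
      exact (ConnectedComponent.mem_supp_iff _ _).1 hx₀
    have hcg := congrArg (ConnectedComponent.map (Y.inclHom hsub)) hcc
    rwa [hmapeq c₁, hmapeq c₂] at hcg
end
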